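/- Under Lebesgue measure λ on (0,1), the digit sequence (d_n)_{n≥1} of the ROE is a Markov chain: λ({x : d_1(x) = j}) = 1/(j·(j−1)) for every j ≥ 2, and for every n ≥ 2, every admissible sequence (j_1,…,j_{n−1}) with j_{n−1} = j, and every integer k > h_{n−1}(j), the conditional probability satisfies λ(Δ_{j_1…j_{n−1} k})/λ(Δ_{j_1…j_{n−1}}) = h_{n−1}(j)/(k·(k−1)); this ratio depends only on j and k and not on j_1,…,j_{n−2}, and it is 0 for k ≤ h_{n−1}(j). -/

import Mathlib

/-!
The points with first digit `j` form the interval `(1/j, 1/(j-1)]`, of length `1/(j(j-1))`, and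
the first step `x ↦ (b/a)(x - 1/j)` of the algorithm maps it affinely onto `(0, 1/h(j)]`, whose
points have next digit `> h(j)`. Hence the set of points with digits `j_1, …, j_n` is an affine
preimage of the corresponding set for the shifted parameters, and by induction its length is
`(∏_{i<n} a_i(j_i)/b_i(j_i)) / (j_n(j_n-1))`. With `a/b = h/(j(j-1))`, the quotient of two
consecutive lengths is `h(j)/(k(k-1))`. Points with a finite expansion form a countable set and do
not change Lebesgue measure.
-/

open MeasureTheory Set

namespace ROE

/-- The `x`-sequence of the restricted Oppenheim algorithm applied to `x`:
index `k` corresponds to the paper's `x_{k+1}`, and `a k`, `b k` correspond to the paper's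
`a_{k+1}`, `b_{k+1}`.  So `X a b x 0 = x₁ = x` and
`x_{k+2} = (b_{k+1}(d_{k+1})/a_{k+1}(d_{k+1})) · (x_{k+1} - 1/d_{k+1})`. -/
noncomputable def X (a b : ℕ → ℕ → ℕ) (x : ℝ) : ℕ → ℝ
  | 0 => x
  | k + 1 =>
      let xk := X a b x k
      let d : ℕ := (⌊1 / xk⌋).toNat + 1
      ((b k d : ℝ) / (a k d : ℝ)) * (xk - 1 / (d : ℝ))

/-- The digit `d_{k+1}(x) = ⌊1/x_{k+1}⌋ + 1` of the restricted Oppenheim expansion. -/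
noncomputable def D (a b : ℕ → ℕ → ℕ) (x : ℝ) (k : ℕ) : ℕ :=
  (⌊1 / X a b x k⌋).toNat + 1

/-- The restricted Oppenheim expansion of `x` is infinite: all `x_n` lie in `(0,1)`. -/
def InfiniteROE (a b : ℕ → ℕ → ℕ) (x : ℝ) : Prop :=
  ∀ k, X a b x k ∈ Set.Ioo (0 : ℝ) 1

/-- The finite sequence `(j 0, …, j (n-1))` (the paper's `(j_1, …, j_n)`) is admissible:
`j_1 ≥ 2` and `j_{i+1} > h_i(j_i)`.  Here `h i` corresponds to the paper's `h_{i+1}`. -/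
def Admissible (h : ℕ → ℕ → ℕ) (n : ℕ) (j : ℕ → ℕ) : Prop :=
  2 ≤ j 0 ∧ ∀ i, i + 1 < n → h i (j i) < j (i + 1)

/-- The cylinder of rank `n` with base `(j 0, …, j (n-1))`: the set of `x ∈ (0,1)` with
infinite ROE whose first `n` digits are `j 0, …, j (n-1)`. -/
def cylinder (a b : ℕ → ℕ → ℕ) (n : ℕ) (j : ℕ → ℕ) : Set ℝ :=
  {x | x ∈ Set.Ioo (0 : ℝ) 1 ∧ InfiniteROE a b x ∧ ∀ i < n, D a b x i = j i}

/-- The difference-ROE digit `α_{k+1}(x)`: `α₁ = d₁ - 1`, `α_{k+2} = d_{k+2} - h_{k+1}(d_{k+1})`. -/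
noncomputable def alpha (a b h : ℕ → ℕ → ℕ) (x : ℝ) : ℕ → ℕ
  | 0 => D a b x 0 - 1
  | k + 1 => D a b x (k + 1) - h k (D a b x k)

/-- The digit sequence `d` reconstructed from a sequence `α` of difference-ROE symbols:
`d₁ = α₁ + 1`, `d_{k+2} = h_{k+1}(d_{k+1}) + α_{k+2}`. -/
def dSeq (h : ℕ → ℕ → ℕ) (α : ℕ → ℕ) : ℕ → ℕ
  | 0 => α 0 + 1
  | k + 1 => h k (dSeq h α k) + α (k + 1)

/-- The real number whose difference-ROE digits are `(α k)`:
`Φ(α) = Σ_{n≥1} (∏_{i=1}^{n-1} a_i(d_i)/b_i(d_i)) · (1/d_n)`. -/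
noncomputable def Phi (a b h : ℕ → ℕ → ℕ) (α : ℕ → ℕ) : ℝ :=
  ∑' n : ℕ, (∏ i ∈ Finset.range n, (a i (dSeq h α i) : ℝ) / (b i (dSeq h α i) : ℝ)) *
    (1 / (dSeq h α n : ℝ))

noncomputable def digit (y : ℝ) : ℕ := (⌊1 / y⌋).toNat + 1

lemma D_eq_digit (a b : ℕ → ℕ → ℕ) (x : ℝ) (k : ℕ) : D a b x k = digit (X a b x k) := rfl

lemma X_succ (a b : ℕ → ℕ → ℕ) (x : ℝ) (k : ℕ) :
    X a b x (k + 1) =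
      (b k (D a b x k) / a k (D a b x k) : ℝ) * (X a b x k - 1 / (D a b x k : ℝ)) := rfl

/-- For `y ∉ (0, 1]` the floor of `1 / y` is at most `0`, so the digit is `1`. -/
lemma digit_eq_iff {y : ℝ} {j : ℕ} (hj : 2 ≤ j) :
    digit y = j ↔ y ∈ Ioc (1 / (j : ℝ)) (1 / ((j : ℝ) - 1)) := by
  have hjR : (2 : ℝ) ≤ j := by exact_mod_cast hj
  have hfloor : digit y = j ↔ ⌊1 / y⌋ = (j : ℤ) - 1 := by unfold digit; omega
  rw [hfloor, Int.floor_eq_iff, mem_Ioc]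
  push_cast
  rcases le_or_gt y 0 with hy | hy
  · have : 1 / y ≤ 0 := one_div_nonpos.2 hy
    have : 0 < 1 / (j : ℝ) := by positivity
    constructor <;> intro h <;> linarith [h.1]
  · rw [sub_add_cancel, le_one_div (by linarith) hy, one_div_lt hy (by linarith), and_comm]

lemma two_le_digit {y : ℝ} (hy : y ∈ Ioc (0 : ℝ) 1) : 2 ≤ digit y := by
  have : (1 : ℤ) ≤ ⌊1 / y⌋ := Int.le_floor.2 (by simpa using one_le_one_div hy.1 hy.2)
  unfold digit; omega

lemma lt_digit {y : ℝ} {m : ℕ} (hy : 0 < y) (hym : y ≤ 1 / (m : ℝ)) : m < digit y := by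
  have hm : (m : ℝ) ≤ 1 / y := by
    rcases Nat.eq_zero_or_pos m with rfl | hm
    · simpa using hy.le
    · exact (le_one_div (by exact_mod_cast hm) hy).2 hym
  have : (m : ℤ) ≤ ⌊1 / y⌋ := Int.le_floor.2 (by exact_mod_cast hm)
  unfold digit; omega

lemma mem_Ioc_of_digit_eq {y : ℝ} {j : ℕ} (hj : 2 ≤ j) (hy : digit y = j) :
    y ∈ Ioc (0 : ℝ) 1 := by
  have hjR : (2 : ℝ) ≤ j := by exact_mod_cast hj
  obtain ⟨hl, hr⟩ := (digit_eq_iff hj).1 hy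
  exact ⟨lt_trans (by positivity) hl, hr.trans (div_le_one_of_le₀ (by linarith) (by linarith))⟩

lemma X_shift (a b : ℕ → ℕ → ℕ) (x : ℝ) (k : ℕ) :
    X a b x (k + 1) = X (fun i => a (i + 1)) (fun i => b (i + 1)) (X a b x 1) k := by
  induction k with
  | zero => rfl
  | succ k ih =>
    have hD : D a b x (k + 1) = D (fun i => a (i + 1)) (fun i => b (i + 1)) (X a b x 1) k := by
      rw [D_eq_digit, D_eq_digit, ih]
    rw [X_succ a b x (k + 1), hD, ih, X_succ _ _ _ k]

lemma D_shift (a b : ℕ → ℕ → ℕ) (x : ℝ) (k : ℕ) :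
    D a b x (k + 1) = D (fun i => a (i + 1)) (fun i => b (i + 1)) (X a b x 1) k := by
  rw [D_eq_digit, D_eq_digit, X_shift]

def digitSet (a b : ℕ → ℕ → ℕ) (n : ℕ) (j : ℕ → ℕ) : Set ℝ :=
  {x | ∀ i < n, D a b x i = j i}

lemma digitSet_one (a b : ℕ → ℕ → ℕ) {j : ℕ → ℕ} (hj : 2 ≤ j 0) :
    digitSet a b 1 j = Ioc (1 / (j 0 : ℝ)) (1 / ((j 0 : ℝ) - 1)) := by
  ext x
  simp only [digitSet, mem_ofPred_eq, Nat.lt_one_iff, forall_eq, D_eq_digit]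
  exact digit_eq_iff hj

lemma volume_preimage_mul_sub {c : ℝ} (hc : 0 < c) (t : ℝ) (s : Set ℝ) :
    volume ((fun x => c * (x - t)) ⁻¹' s) = ENNReal.ofReal c⁻¹ * volume s := by
  have hcomp : (fun x => c * (x - t)) = (fun y => c * y) ∘ (fun x => x + -t) := by
    ext x
    simp [sub_eq_add_neg]
  rw [hcomp, preimage_comp, measure_preimage_add_right, Real.volume_preimage_mul_left hc.ne',
    abs_of_pos (inv_pos.2 hc)]

lemma Admissible.two_le {h : ℕ → ℕ → ℕ} {n : ℕ} {j : ℕ → ℕ} (hadm : Admissible h n j)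
    (hpos : ∀ k j, 2 ≤ j → 0 < h k j) : ∀ i < n, 2 ≤ j i
  | 0, _ => hadm.1
  | i + 1, hi => by
    have := hadm.2 i hi
    have := hpos i (j i) (hadm.two_le hpos i (by omega))
    omega

lemma Admissible.tail {h : ℕ → ℕ → ℕ} {n : ℕ} {j : ℕ → ℕ} (hadm : Admissible h (n + 2) j)
    (hpos : ∀ k j, 2 ≤ j → 0 < h k j) :
    Admissible (fun i => h (i + 1)) (n + 1) (fun i => j (i + 1)) :=
  ⟨hadm.two_le hpos 1 (by omega), fun i hi => hadm.2 (i + 1) (by omega)⟩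

lemma Admissible.update {h : ℕ → ℕ → ℕ} {n k : ℕ} {j : ℕ → ℕ} (hadm : Admissible h (n + 1) j)
    (hk : h n (j n) < k) : Admissible h (n + 2) (Function.update j (n + 1) k) := by
  refine ⟨by simpa [Function.update_of_ne] using hadm.1, fun i hi => ?_⟩
  rcases Nat.lt_or_ge (i + 1) (n + 1) with hlt | hge
  · rw [Function.update_of_ne (by omega), Function.update_of_ne (by omega)]
    exact hadm.2 i hlt
  · obtain rfl : i = n := by omega
    simpa using hk

/-- The paper's condition `h = (a / b) · j · (j - 1)`, cleared of denominators. -/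
structure Params (a b h : ℕ → ℕ → ℕ) : Prop where
  a_pos : ∀ k j, 2 ≤ j → 0 < a k j
  mul_eq : ∀ k j, 2 ≤ j → b k j * h k j = a k j * j * (j - 1)

namespace Params

variable {a b h : ℕ → ℕ → ℕ} {x : ℝ}

lemma shift (P : Params a b h) :
    Params (fun i => a (i + 1)) (fun i => b (i + 1)) (fun i => h (i + 1)) :=
  ⟨fun k => P.a_pos (k + 1), fun k => P.mul_eq (k + 1)⟩

lemma b_pos_and_h_pos (P : Params a b h) {k j : ℕ} (hj : 2 ≤ j) : 0 < b k j ∧ 0 < h k j := by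
  have : 0 < b k j * h k j := by
    rw [P.mul_eq k j hj]
    exact Nat.mul_pos (Nat.mul_pos (P.a_pos k j hj) (by omega)) (by omega)
  exact ⟨Nat.pos_of_mul_pos_right this, Nat.pos_of_mul_pos_left this⟩

lemma b_pos (P : Params a b h) {k j : ℕ} (hj : 2 ≤ j) : 0 < b k j := (P.b_pos_and_h_pos hj).1

lemma h_pos (P : Params a b h) {k j : ℕ} (hj : 2 ≤ j) : 0 < h k j := (P.b_pos_and_h_pos hj).2

lemma div_eq (P : Params a b h) {k j : ℕ} (hj : 2 ≤ j) :
    (a k j / b k j : ℝ) = h k j / (j * (j - 1)) := by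
  have hjR : (2 : ℝ) ≤ j := by exact_mod_cast hj
  have hmul : ((b k j * h k j : ℕ) : ℝ) = ((a k j * j * (j - 1) : ℕ) : ℝ) := by
    rw [P.mul_eq k j hj]
  push_cast [Nat.cast_sub (by omega : 1 ≤ j)] at hmul
  have hb : (b k j : ℝ) ≠ 0 := by exact_mod_cast (P.b_pos hj).ne'
  rw [div_eq_div_iff hb (by nlinarith)]
  linear_combination -hmul

/-- This holds because `(b / a) · (1 / (j - 1) - 1 / j) = 1 / h`. -/
lemma mem_Ioc_iff (P : Params a b h) {k j : ℕ} (hj : 2 ≤ j) {y : ℝ} :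
    y ∈ Ioc (1 / (j : ℝ)) (1 / ((j : ℝ) - 1)) ↔
      (b k j / a k j : ℝ) * (y - 1 / j) ∈ Ioc 0 (1 / (h k j : ℝ)) := by
  have hjR : (2 : ℝ) ≤ j := by exact_mod_cast hj
  have hh : (0 : ℝ) < h k j := by exact_mod_cast P.h_pos hj
  have hjj : (0 : ℝ) < j * (j - 1) := by nlinarith
  rw [← inv_div (a k j : ℝ), P.div_eq hj, inv_div, mem_Ioc, mem_Ioc, div_mul_eq_mul_div,
    div_le_div_iff_of_pos_right hh, div_pos_iff_of_pos_right hh, mul_pos_iff_of_pos_left hjj,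
    sub_pos, ← le_div_iff₀' hjj, sub_le_iff_le_add']
  have : 1 / ((j : ℝ) - 1) - 1 / j = 1 / (j * (j - 1)) := by
    have : (j : ℝ) - 1 ≠ 0 := by linarith
    field_simp
    ring
  rw [← this, add_sub_cancel]

lemma X_succ_mem_Ioc (P : Params a b h) {k : ℕ} (hx : X a b x k ∈ Ioc (0 : ℝ) 1) :
    X a b x (k + 1) ∈ Ioc 0 (1 / (h k (D a b x k) : ℝ)) := by
  have hd := two_le_digit hx
  exact (P.mem_Ioc_iff hd).1 ((digit_eq_iff hd).1 rfl)

lemma X_mem_Ioc (P : Params a b h) (hx : x ∈ Ioc (0 : ℝ) 1) : ∀ k, X a b x k ∈ Ioc (0 : ℝ) 1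
  | 0 => hx
  | k + 1 => by
    have hXk := P.X_mem_Ioc hx k
    have hh : (1 : ℝ) ≤ h k (D a b x k) := by exact_mod_cast P.h_pos (two_le_digit hXk)
    have hX := P.X_succ_mem_Ioc hXk
    exact ⟨hX.1, hX.2.trans (div_le_one_of_le₀ hh (by positivity))⟩

lemma h_lt_D_succ (P : Params a b h) (hx : x ∈ Ioc (0 : ℝ) 1) (k : ℕ) :
    h k (D a b x k) < D a b x (k + 1) :=
  have hX := P.X_succ_mem_Ioc (P.X_mem_Ioc hx k)
  lt_digit hX.1 hX.2

lemma eq_of_D_eq_of_X_eq (P : Params a b h) {y : ℝ} (hx : x ∈ Ioc (0 : ℝ) 1)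
    (hy : y ∈ Ioc (0 : ℝ) 1) :
    ∀ {M : ℕ}, (∀ i < M, D a b x i = D a b y i) → X a b x M = X a b y M → x = y
  | 0, _, hX => hX
  | M + 1, hD, hX => by
    have hd := two_le_digit (P.X_mem_Ioc hx M)
    have hc : (b M (D a b x M) / a M (D a b x M) : ℝ) ≠ 0 :=
      div_ne_zero (by exact_mod_cast (P.b_pos hd).ne') (by exact_mod_cast (P.a_pos _ _ hd).ne')
    rw [X_succ, X_succ, ← hD M M.lt_succ_self, mul_right_inj' hc, sub_left_inj] at hX
    exact P.eq_of_D_eq_of_X_eq hx hy (fun i hi => hD i (by omega)) hX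

/-- A point whose expansion terminates has `X a b x M = 1` for some `M`, and is determined by
that `M` and its first `M` digits. -/
lemma countable_not_infiniteROE (P : Params a b h) :
    {x : ℝ | x ∈ Ioc (0 : ℝ) 1 ∧ ¬ InfiniteROE a b x}.Countable := by
  have hsub : {x : ℝ | x ∈ Ioc (0 : ℝ) 1 ∧ ¬ InfiniteROE a b x} ⊆
      ⋃ (M : ℕ) (p : Fin M → ℕ),
        {x | x ∈ Ioc (0 : ℝ) 1 ∧ X a b x M = 1 ∧ ∀ i : Fin M, D a b x i = p i} := by
    rintro x ⟨hx, hnot⟩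
    obtain ⟨M, hM⟩ := not_forall.1 hnot
    have hXM := P.X_mem_Ioc hx M
    have hone : X a b x M = 1 := by
      by_contra hne
      exact hM ⟨hXM.1, lt_of_le_of_ne hXM.2 hne⟩
    exact mem_iUnion₂.2 ⟨M, fun i => D a b x i, hx, hone, fun _ => rfl⟩
  refine .mono hsub (countable_iUnion fun M => countable_iUnion fun p => Subsingleton.countable ?_)
  rintro x ⟨hx, hx1, hxp⟩ y ⟨hy, hy1, hyp⟩
  exact P.eq_of_D_eq_of_X_eq hx hy (fun i hi => (hxp ⟨i, hi⟩).trans (hyp ⟨i, hi⟩).symm)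
    (hx1.trans hy1.symm)

lemma volume_cylinder_eq_volume_digitSet (P : Params a b h) {j : ℕ → ℕ} (hj : 2 ≤ j 0) (n : ℕ) :
    volume (cylinder a b (n + 1) j) = volume (digitSet a b (n + 1) j) := by
  refine measure_eq_measure_of_null_sdiff (fun x hx => hx.2.2)
    (measure_mono_null ?_ (P.countable_not_infiniteROE.measure_zero _))
  rintro x ⟨hxj, hxc⟩
  exact ⟨mem_Ioc_of_digit_eq hj (hxj 0 n.succ_pos), fun hinf => hxc ⟨hinf 0, hinf, hxj⟩⟩

lemma digitSet_succ_succ (P : Params a b h) {j : ℕ → ℕ} (hj0 : 2 ≤ j 0)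
    (hj1 : h 0 (j 0) < j 1) (n : ℕ) :
    digitSet a b (n + 2) j =
      (fun x => (b 0 (j 0) / a 0 (j 0) : ℝ) * (x - 1 / j 0)) ⁻¹'
        digitSet (fun i => a (i + 1)) (fun i => b (i + 1)) (n + 1) (fun i => j (i + 1)) := by
  ext x
  simp only [digitSet, mem_preimage, mem_ofPred_eq]
  have hshift : D a b x 0 = j 0 →
      ((∀ i < n + 2, D a b x i = j i) ↔ ∀ i < n + 1,
        D (fun i => a (i + 1)) (fun i => b (i + 1)) ((b 0 (j 0) / a 0 (j 0) : ℝ) * (x - 1 / j 0)) i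
          = j (i + 1)) := by
    intro h0
    have hX1 : X a b x 1 = (b 0 (j 0) / a 0 (j 0) : ℝ) * (x - 1 / j 0) := by rw [X_succ, h0]; rfl
    simp only [← hX1, ← D_shift, Nat.forall_lt_succ_left (n := n + 1), h0, true_and]
  refine ⟨fun hx => (hshift (hx 0 (by omega))).1 hx, fun hx => (hshift ?_).2 hx⟩
  have hj1' : 2 ≤ j 1 := by have := P.h_pos (k := 0) hj0; omega
  have hh : (0 : ℝ) < h 0 (j 0) := by exact_mod_cast P.h_pos hj0
  have hhj : (h 0 (j 0) : ℝ) ≤ j 1 - 1 := by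
    have : ((h 0 (j 0) + 1 : ℕ) : ℝ) ≤ j 1 := by exact_mod_cast hj1
    push_cast at this
    linarith
  obtain ⟨hl, hr⟩ := (digit_eq_iff hj1').1 (hx 0 n.succ_pos)
  refine (digit_eq_iff hj0).2 ((P.mem_Ioc_iff hj0).2 ⟨lt_trans (by positivity) hl, ?_⟩)
  exact hr.trans (one_div_le_one_div_of_le hh hhj)

lemma volume_digitSet (P : Params a b h) {n : ℕ} {j : ℕ → ℕ} (hadm : Admissible h (n + 1) j) :
    volume (digitSet a b (n + 1) j) =
      ENNReal.ofReal ((∏ i ∈ Finset.range n, (a i (j i) / b i (j i) : ℝ)) /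
        (j n * (j n - 1))) := by
  induction n generalizing a b h j with
  | zero =>
    have hjR : (2 : ℝ) ≤ j 0 := by exact_mod_cast hadm.1
    rw [digitSet_one a b hadm.1, Real.volume_Ioc, Finset.prod_range_zero]
    congr 1
    have : (j 0 : ℝ) - 1 ≠ 0 := by linarith
    field_simp
    ring
  | succ n ih =>
    have hj0 := hadm.1
    have hc : (0 : ℝ) < b 0 (j 0) / a 0 (j 0) := by
      have := P.b_pos (k := 0) hj0
      have := P.a_pos 0 (j 0) hj0
      positivity
    rw [P.digitSet_succ_succ hj0 (hadm.2 0 (by omega)), volume_preimage_mul_sub hc,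
      ih P.shift (hadm.tail fun _ _ => P.h_pos), ← ENNReal.ofReal_mul (by positivity),
      Finset.prod_range_succ', inv_div]
    congr 1
    ring

lemma volume_cylinder (P : Params a b h) {n : ℕ} {j : ℕ → ℕ} (hadm : Admissible h (n + 1) j) :
    volume (cylinder a b (n + 1) j) =
      ENNReal.ofReal ((∏ i ∈ Finset.range n, (a i (j i) / b i (j i) : ℝ)) /
        (j n * (j n - 1))) :=
  (P.volume_cylinder_eq_volume_digitSet hadm.1 n).trans (P.volume_digitSet hadm)

lemma volume_cylinder_ne_zero (P : Params a b h) {n : ℕ} {j : ℕ → ℕ}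
    (hadm : Admissible h (n + 1) j) : volume (cylinder a b (n + 1) j) ≠ 0 := by
  have htwo := hadm.two_le fun _ _ => P.h_pos
  have hjR : (2 : ℝ) ≤ j n := by exact_mod_cast htwo n n.lt_succ_self
  have hprod : 0 < ∏ i ∈ Finset.range n, (a i (j i) / b i (j i) : ℝ) := by
    refine Finset.prod_pos fun i hi => ?_
    have hi2 := htwo i (by simp at hi; omega)
    have := P.b_pos (k := i) hi2
    have := P.a_pos i (j i) hi2
    positivity
  rw [P.volume_cylinder hadm]
  exact (ENNReal.ofReal_pos.2 (div_pos hprod (by nlinarith))).ne'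

lemma volume_cylinder_update (P : Params a b h) {n k : ℕ} {j : ℕ → ℕ}
    (hadm : Admissible h (n + 1) j) (hk : h n (j n) < k) :
    volume (cylinder a b (n + 2) (Function.update j (n + 1) k)) =
      ENNReal.ofReal (h n (j n) / (k * (k - 1))) * volume (cylinder a b (n + 1) j) := by
  have hjn := hadm.two_le (fun _ _ => P.h_pos) n n.lt_succ_self
  have hkR : (1 : ℝ) ≤ k := by have := P.h_pos (k := n) hjn; exact_mod_cast (by omega : 1 ≤ k)
  have hprefix : ∏ i ∈ Finset.range (n + 1),
      (a i (Function.update j (n + 1) k i) / b i (Function.update j (n + 1) k i) : ℝ) =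
        ∏ i ∈ Finset.range (n + 1), (a i (j i) / b i (j i) : ℝ) :=
    Finset.prod_congr rfl fun i hi => by
      rw [Function.update_of_ne (by simp at hi; omega)]
  rw [P.volume_cylinder (hadm.update hk), P.volume_cylinder hadm,
    ← ENNReal.ofReal_mul (div_nonneg (by positivity) (mul_nonneg (by positivity) (by linarith))),
    hprefix, Function.update_self, Finset.prod_range_succ, P.div_eq hjn]
  congr 1
  ring

lemma cylinder_eq_empty (P : Params a b h) {n : ℕ} {j : ℕ → ℕ} (hj : j (n + 1) ≤ h n (j n)) :
    cylinder a b (n + 2) j = ∅ := by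
  refine eq_empty_iff_forall_notMem.2 fun x ⟨hx, _, hD⟩ => ?_
  have := P.h_lt_D_succ (Ioo_subset_Ioc_self hx) n
  rw [hD n (by omega), hD (n + 1) (by omega)] at this
  omega

end Params

theorem roe_markov_chain_general (a b h : ℕ → ℕ → ℕ)
    (ha : ∀ k j, 2 ≤ j → 0 < a k j)
    (hab : ∀ k j, 2 ≤ j → b k j * h k j = a k j * j * (j - 1)) :
    (∀ j : ℕ, 2 ≤ j →
      volume (cylinder a b 1 (fun _ => j)) =
        ENNReal.ofReal (1 / ((j : ℝ) * ((j : ℝ) - 1)))) ∧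
    (∀ m : ℕ, 1 ≤ m → ∀ j : ℕ → ℕ, Admissible h m j → ∀ k : ℕ,
      h (m - 1) (j (m - 1)) < k →
        volume (cylinder a b (m + 1) (Function.update j m k)) /
            volume (cylinder a b m j) =
          ENNReal.ofReal ((h (m - 1) (j (m - 1)) : ℝ) / ((k : ℝ) * ((k : ℝ) - 1)))) ∧
    (∀ m : ℕ, 1 ≤ m → ∀ j : ℕ → ℕ, Admissible h m j → ∀ k : ℕ,
      k ≤ h (m - 1) (j (m - 1)) →
        volume (cylinder a b (m + 1) (Function.update j m k)) /
            volume (cylinder a b m j) = 0) := by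
  have P : Params a b h := ⟨ha, hab⟩
  refine ⟨fun j hj => ?_, fun m hm j hadm k hk => ?_, fun m hm j _ k hk => ?_⟩
  · simpa using P.volume_cylinder (n := 0) (j := fun _ => j) ⟨hj, by omega⟩
  · obtain ⟨n, rfl⟩ : ∃ n, m = n + 1 := ⟨m - 1, by omega⟩
    rw [Nat.add_sub_cancel] at hk ⊢
    rw [P.volume_cylinder_update hadm hk, ENNReal.mul_div_cancel_right
      (P.volume_cylinder_ne_zero hadm) (P.volume_cylinder hadm ▸ ENNReal.ofReal_ne_top)]
  · obtain ⟨n, rfl⟩ : ∃ n, m = n + 1 := ⟨m - 1, by omega⟩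
    rw [Nat.add_sub_cancel] at hk
    rw [P.cylinder_eq_empty (by simpa [Function.update_of_ne] using hk), measure_empty,
      ENNReal.zero_div]

/-- Under Lebesgue measure on `(0,1)` the ROE digit sequence is a Markov chain:
`λ({x : d₁(x) = j}) = 1/(j(j-1))` for `j ≥ 2`; for every `n ≥ 2` (here `n = m + 1` with
`m ≥ 1`), every admissible `(j_1, …, j_{n-1})` and every `k > h_{n-1}(j_{n-1})`,
`λ(Δ_{j_1…j_{n-1}k}) / λ(Δ_{j_1…j_{n-1}}) = h_{n-1}(j_{n-1}) / (k(k-1))` — a quantity depending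
only on `j_{n-1}` and `k` — and the transition probability is `0` when `k ≤ h_{n-1}(j_{n-1})`. -/
theorem roe_markov_chain (a b h : ℕ → ℕ → ℕ)
    (ha : ∀ k j, 2 ≤ j → 0 < a k j) (hb : ∀ k j, 2 ≤ j → 0 < b k j)
    (hpos : ∀ k j, 2 ≤ j → 0 < h k j)
    (hab : ∀ k j, 2 ≤ j → b k j * h k j = a k j * j * (j - 1)) :
    (∀ j : ℕ, 2 ≤ j →
      volume (cylinder a b 1 (fun _ => j)) =
        ENNReal.ofReal (1 / ((j : ℝ) * ((j : ℝ) - 1)))) ∧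
    (∀ m : ℕ, 1 ≤ m → ∀ j : ℕ → ℕ, Admissible h m j → ∀ k : ℕ,
      h (m - 1) (j (m - 1)) < k →
        volume (cylinder a b (m + 1) (Function.update j m k)) /
            volume (cylinder a b m j) =
          ENNReal.ofReal ((h (m - 1) (j (m - 1)) : ℝ) / ((k : ℝ) * ((k : ℝ) - 1)))) ∧
    (∀ m : ℕ, 1 ≤ m → ∀ j : ℕ → ℕ, Admissible h m j → ∀ k : ℕ,
      k ≤ h (m - 1) (j (m - 1)) →
        volume (cylinder a b (m + 1) (Function.update j m k)) /
            volume (cylinder a b m j) = 0) :=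
  roe_markov_chain_general a b h ha hab

end ROE
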